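/- There exist a constant c > 0 and an integer n₀ such that for every n ≥ n₀ there exists a function f : [n]² → ℝ whose deletion distance from (2,4,1,3)-freeness is at most 1 and whose Hamming distance from (2,4,1,3)-freeness is at least c·n. -/

import Mathlib

/-- The coordinatewise (grid) partial order on `[n]^d`, modeled as `Fin d → Fin n`. -/
def gridLE {n d : ℕ} (x y : Fin d → Fin n) : Prop := ∀ i, x i ≤ y i

/-- Strict grid order: `x ≺ y` iff `x ≼ y` and `x ≠ y`. -/
def gridLT {n d : ℕ} (x y : Fin d → Fin n) : Prop := gridLE x y ∧ x ≠ y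

/-- `x : Fin k → [n]^d` is a `π`-appearance of `f`: a chain `x 0 ≺ x 1 ≺ ⋯ ≺ x (k-1)`
whose `f`-values are ordered exactly as `π` orders `[k]`. -/
def IsPiAppearance {n d k : ℕ} (f : (Fin d → Fin n) → ℝ) (π : Equiv.Perm (Fin k))
    (x : Fin k → Fin d → Fin n) : Prop :=
  (∀ i j : Fin k, i < j → gridLT (x i) (x j)) ∧
  (∀ i j : Fin k, f (x i) < f (x j) ↔ π i < π j)

/-- `f` restricted to `A` has no `π`-appearance. -/
def PiFreeOn {n d k : ℕ} (f : (Fin d → Fin n) → ℝ) (π : Equiv.Perm (Fin k))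
    (A : Set (Fin d → Fin n)) : Prop :=
  ¬ ∃ x : Fin k → Fin d → Fin n, IsPiAppearance f π x ∧ ∀ i, x i ∈ A

/-- `f` is `π`-free. -/
def PiFree {n d k : ℕ} (f : (Fin d → Fin n) → ℝ) (π : Equiv.Perm (Fin k)) : Prop :=
  PiFreeOn f π Set.univ

/-- The deletion distance of `f` from `π`-freeness: the minimum cardinality of a set `S`
of indices such that `f` restricted to the complement of `S` is `π`-free. -/
noncomputable def patternDeletionDist {n d k : ℕ} (f : (Fin d → Fin n) → ℝ)
    (π : Equiv.Perm (Fin k)) : ℕ :=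
  sInf {s : ℕ | ∃ S : Set (Fin d → Fin n), S.ncard = s ∧ PiFreeOn f π Sᶜ}

/-- The Hamming distance of `f` from `π`-freeness: the minimum number of points where `f`
must be changed to obtain a `π`-free function. -/
noncomputable def patternHammingDist {n d k : ℕ} (f : (Fin d → Fin n) → ℝ)
    (π : Equiv.Perm (Fin k)) : ℕ :=
  sInf {s : ℕ | ∃ g : (Fin d → Fin n) → ℝ, PiFree g π ∧ {x | f x ≠ g x}.ncard = s}

/-- The permutation `(2,4,1,3)` of `[4]` (0-indexed: `0 ↦ 1, 1 ↦ 3, 2 ↦ 0, 3 ↦ 2`). -/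
def perm2413 : Equiv.Perm (Fin 4) :=
  ⟨![1, 3, 0, 2], ![2, 0, 3, 1], by decide, by decide⟩

/-! The function is constant `5` off a cross centred at `(2M, 2M)`; reading upwards, the column
carries the values `2 | 0 | 4` and, reading rightwards, the row carries `6 | 10 | 8`. A chain
avoiding the centre cannot meet both the lower column arm and the left row arm, nor both the upper
column arm and the right row arm, and the value sequences that remain contain no `2413`: so
deleting the centre leaves `f` free. On the other hand, whatever value `c` a `2413`-free `g` takes
at the centre, either `c > 4` and each column triple `(2, 0, 4)` at heights `M + i`,
`2M + 1 + i`, `3M + 1 + i` completes a copy `2, c, 0, 4`, or `c < 6` and each row triple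
`(6, 10, 8)` completes a copy `6, 10, c, 8`. These `M` triples are disjoint, so `g` differs from
`f` in at least `M` points; take `M = ⌊n/5⌋`. -/

section Pattern

variable {n d k : ℕ} {π : Equiv.Perm (Fin k)}

lemma gridLT_iff_lt {x y : Fin d → Fin n} : gridLT x y ↔ x < y := by
  rw [lt_iff_le_and_ne]
  rfl

lemma isPiAppearance_iff {f : (Fin d → Fin n) → ℝ} {x : Fin k → Fin d → Fin n} :
    IsPiAppearance f π x ↔ StrictMono x ∧ ∀ i j, f (x i) < f (x j) ↔ π i < π j := by
  simp only [IsPiAppearance, gridLT_iff_lt, StrictMono]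

lemma isPiAppearance_congr {f g : (Fin d → Fin n) → ℝ} {x : Fin k → Fin d → Fin n}
    (h : ∀ i, f (x i) = g (x i)) : IsPiAppearance f π x ↔ IsPiAppearance g π x := by
  simp only [IsPiAppearance, h]

lemma piFree_const (hk : 1 < k) (c : ℝ) : PiFree (fun _ : Fin d → Fin n => c) π := by
  rintro ⟨x, ⟨-, hval⟩, -⟩
  have h01 : π (π.symm ⟨0, by omega⟩) < π (π.symm ⟨1, hk⟩) := by simp
  exact lt_irrefl c ((hval _ _).2 h01)

lemma patternDeletionDist_le_ncard {f : (Fin d → Fin n) → ℝ} {S : Set (Fin d → Fin n)}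
    (h : PiFreeOn f π Sᶜ) : patternDeletionDist f π ≤ S.ncard :=
  Nat.sInf_le ⟨S, rfl, h⟩

lemma le_patternHammingDist (hk : 1 < k) {f : (Fin d → Fin n) → ℝ} {M : ℕ}
    (h : ∀ g, PiFree g π → ∃ z : Fin M → Fin d → Fin n, Function.Injective z ∧
      ∀ i, f (z i) ≠ g (z i)) :
    M ≤ patternHammingDist f π := by
  obtain ⟨g, hg, hfg⟩ := Nat.sInf_mem (s := {s | ∃ g : (Fin d → Fin n) → ℝ,
    PiFree g π ∧ {x | f x ≠ g x}.ncard = s}) ⟨_, fun _ => 0, piFree_const hk 0, rfl⟩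
  obtain ⟨z, hz, hne⟩ := h g hg
  calc M = (Set.univ : Set (Fin M)).ncard := by simp
    _ ≤ {x | f x ≠ g x}.ncard :=
      Set.ncard_le_ncard_of_injOn z (fun i _ => hne i) hz.injOn (Set.toFinite _)
    _ = patternHammingDist f π := hfg

lemma exists_injective_ne_of_chains {f g : (Fin d → Fin n) → ℝ} (hg : PiFree g π)
    {M : ℕ} (p : Fin d → Fin n) (x : Fin M → Fin k → Fin d → Fin n)
    (hx : ∀ i, IsPiAppearance (Function.update f p (g p)) π (x i))
    (hdisj : ∀ i i' a a', x i a = x i' a' → x i a ≠ p → i = i') :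
    ∃ z : Fin M → Fin d → Fin n, Function.Injective z ∧ ∀ i, f (z i) ≠ g (z i) := by
  have hmiss : ∀ i, ∃ a, x i a ≠ p ∧ f (x i a) ≠ g (x i a) := by
    intro i
    by_contra! hall
    refine hg ⟨x i, (isPiAppearance_congr fun a => ?_).1 (hx i), fun _ => trivial⟩
    by_cases ha : x i a = p
    · rw [ha, Function.update_self]
    · rw [Function.update_of_ne ha, hall a ha]
  choose a hap hne using hmiss
  exact ⟨fun i => x i (a i), fun i i' h => hdisj i i' _ _ h (hap i), hne⟩

end Pattern

lemma perm2413_orderType_iff (w : Fin 4 → ℝ) :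
    (∀ i j, w i < w j ↔ perm2413 i < perm2413 j) ↔ w 2 < w 0 ∧ w 0 < w 3 ∧ w 3 < w 1 := by
  refine ⟨fun h => ⟨(h 2 0).2 (by decide), (h 0 3).2 (by decide), (h 3 1).2 (by decide)⟩,
    ?_⟩
  rintro ⟨h20, h03, h31⟩ i j
  fin_cases i <;> fin_cases j <;> simp [perm2413] <;> linarith

lemma isPiAppearance_perm2413_iff {n d : ℕ} {f : (Fin d → Fin n) → ℝ}
    {x : Fin 4 → Fin d → Fin n} :
    IsPiAppearance f perm2413 x ↔
      StrictMono x ∧ f (x 2) < f (x 0) ∧ f (x 0) < f (x 3) ∧ f (x 3) < f (x 1) := by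
  rw [isPiAppearance_iff, perm2413_orderType_iff (fun i => f (x i))]

def crossProfile (M : ℕ) (p : ℕ × ℕ) : ℕ :=
  if p.1 = 2 * M then
    if M ≤ p.2 ∧ p.2 < 2 * M then 2
    else if 2 * M < p.2 ∧ p.2 ≤ 3 * M then 0
    else if 3 * M < p.2 ∧ p.2 ≤ 4 * M then 4
    else 5
  else if p.2 = 2 * M then
    if p.1 < M then 6
    else if M ≤ p.1 ∧ p.1 < 2 * M then 10
    else if 2 * M < p.1 ∧ p.1 ≤ 3 * M then 8
    else 5
  else 5

lemma crossProfile_cases (M : ℕ) (p : ℕ × ℕ) :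
    (p.1 = 2 * M ∧ M ≤ p.2 ∧ p.2 < 2 * M ∧ crossProfile M p = 2) ∨
    (p.1 = 2 * M ∧ 2 * M < p.2 ∧ p.2 ≤ 3 * M ∧ crossProfile M p = 0) ∨
    (p.1 = 2 * M ∧ 3 * M < p.2 ∧ p.2 ≤ 4 * M ∧ crossProfile M p = 4) ∨
    (p.1 ≠ 2 * M ∧ p.2 = 2 * M ∧ p.1 < M ∧ crossProfile M p = 6) ∨
    (p.1 ≠ 2 * M ∧ p.2 = 2 * M ∧ M ≤ p.1 ∧ p.1 < 2 * M ∧ crossProfile M p = 10) ∨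
    (p.1 ≠ 2 * M ∧ p.2 = 2 * M ∧ 2 * M < p.1 ∧ p.1 ≤ 3 * M ∧ crossProfile M p = 8) ∨
    (crossProfile M p = 5 ∧ (p.1 = 2 * M → p.2 < M ∨ p.2 = 2 * M ∨ 4 * M < p.2) ∧
      (p.2 = 2 * M → p.1 = 2 * M ∨ 3 * M < p.1)) := by
  obtain ⟨u, v⟩ := p
  simp only [crossProfile]
  split_ifs <;> norm_num <;> omega

lemma crossProfile_not_2413 (M : ℕ) (x : Fin 4 → ℕ × ℕ) (hx : Monotone x)
    (hc : ∀ i, x i ≠ (2 * M, 2 * M)) :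
    ¬ (crossProfile M (x 2) < crossProfile M (x 0) ∧
      crossProfile M (x 0) < crossProfile M (x 3) ∧
      crossProfile M (x 3) < crossProfile M (x 1)) := by
  rintro ⟨h20, h03, h31⟩
  have h01 := hx (show (0 : Fin 4) ≤ 1 by decide)
  have h12 := hx (show (1 : Fin 4) ≤ 2 by decide)
  have h23 := hx (show (2 : Fin 4) ≤ 3 by decide)
  simp only [Prod.le_def] at h01 h12 h23
  have hc' : ∀ i, (x i).1 ≠ 2 * M ∨ (x i).2 ≠ 2 * M := fun i => by
    contrapose! hc
    exact ⟨i, Prod.ext hc.1 hc.2⟩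
  have n0 := hc' 0; have n1 := hc' 1; have n2 := hc' 2; have n3 := hc' 3
  have c0 := crossProfile_cases M (x 0)
  have c2 := crossProfile_cases M (x 2)
  rcases crossProfile_cases M (x 1) with c1|c1|c1|c1|c1|c1|c1 <;>
    rcases crossProfile_cases M (x 3) with c3|c3|c3|c3|c3|c3|c3 <;> omega

noncomputable def crossFun (n M : ℕ) (x : Fin 2 → Fin n) : ℝ :=
  crossProfile M ((x 0 : ℕ), (x 1 : ℕ))

lemma vec2_lt_vec2_iff {α : Type*} [Preorder α] {a b a' b' : α} :
    ![a, b] < ![a', b'] ↔ (a, b) < (a', b') :=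
  (OrderIso.finTwoArrowIso α).lt_iff_lt.symm

section CrossChains

variable {n M : ℕ}

def crossCentre (h : 2 * M < n) : Fin 2 → Fin n := ![⟨2 * M, h⟩, ⟨2 * M, h⟩]

lemma patternDeletionDist_crossFun_le_one (h : 2 * M < n) :
    patternDeletionDist (crossFun n M) perm2413 ≤ 1 := by
  refine (patternDeletionDist_le_ncard (S := {crossCentre h}) ?_).trans (Set.ncard_singleton _).le
  rintro ⟨x, hx, hS⟩
  rw [isPiAppearance_perm2413_iff] at hx
  obtain ⟨hmono, hval⟩ := hx
  refine crossProfile_not_2413 M (fun i => ((x i 0 : ℕ), (x i 1 : ℕ)))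
    (fun i j hij => Prod.mk_le_mk.2 ⟨hmono.monotone hij 0, hmono.monotone hij 1⟩)
    (fun i hi => hS i ?_) (by simpa only [crossFun, Nat.cast_lt] using hval)
  simp only [Prod.mk.injEq] at hi
  ext k
  fin_cases k
  · exact hi.1
  · exact hi.2

def crossColumn (h : 4 * M < n) (i : Fin M) : Fin 4 → Fin 2 → Fin n :=
  have := i.isLt
  ![![⟨2 * M, by omega⟩, ⟨M + i, by omega⟩], crossCentre (by omega : 2 * M < n),
    ![⟨2 * M, by omega⟩, ⟨2 * M + 1 + i, by omega⟩],
    ![⟨2 * M, by omega⟩, ⟨3 * M + 1 + i, by omega⟩]]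

def crossRow (h : 4 * M < n) (i : Fin M) : Fin 4 → Fin 2 → Fin n :=
  have := i.isLt
  ![![⟨i, by omega⟩, ⟨2 * M, by omega⟩], ![⟨M + i, by omega⟩, ⟨2 * M, by omega⟩],
    crossCentre (by omega : 2 * M < n), ![⟨2 * M + 1 + i, by omega⟩, ⟨2 * M, by omega⟩]]

lemma update_crossFun_vec2 (h : 2 * M < n) (c : ℝ) {u v : Fin n}
    (huv : ![u, v] ≠ crossCentre h) :
    Function.update (crossFun n M) (crossCentre h) c ![u, v] = crossProfile M (u, v) := by
  rw [Function.update_of_ne huv]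
  rfl

lemma isPiAppearance_crossColumn (h : 4 * M < n) (i : Fin M) {c : ℝ} (hc : 4 < c) :
    IsPiAppearance (Function.update (crossFun n M) (crossCentre (by omega : 2 * M < n)) c) perm2413
      (crossColumn h i) := by
  have := i.isLt
  rw [isPiAppearance_perm2413_iff]
  refine ⟨?_, ?_⟩
  · refine Fin.strictMono_iff_lt_succ.2 fun j => ?_
    fin_cases j <;> simp [crossColumn, crossCentre, vec2_lt_vec2_iff, Fin.lt_def] <;> omega
  · simp only [crossColumn, Matrix.cons_val, Function.update_self]
    repeat rw [update_crossFun_vec2 _ c (by simp [crossCentre]; omega)]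
    simp (disch := omega) only [crossProfile, if_pos, if_neg]
    norm_num [hc]

lemma isPiAppearance_crossRow (h : 4 * M < n) (i : Fin M) {c : ℝ} (hc : c < 6) :
    IsPiAppearance (Function.update (crossFun n M) (crossCentre (by omega : 2 * M < n)) c) perm2413
      (crossRow h i) := by
  have := i.isLt
  rw [isPiAppearance_perm2413_iff]
  refine ⟨?_, ?_⟩
  · refine Fin.strictMono_iff_lt_succ.2 fun j => ?_
    fin_cases j <;> simp [crossRow, crossCentre, vec2_lt_vec2_iff, Fin.lt_def] <;> omega
  · simp only [crossRow, Matrix.cons_val, Function.update_self]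
    repeat rw [update_crossFun_vec2 _ c (by simp [crossCentre]; omega)]
    simp (disch := omega) only [crossProfile, if_pos, if_neg]
    norm_num [hc]

lemma eq_of_crossColumn_eq (h : 4 * M < n) {i i' : Fin M} {a a' : Fin 4}
    (heq : crossColumn h i a = crossColumn h i' a')
    (ha : crossColumn h i a ≠ crossCentre (by omega : 2 * M < n)) :
    i = i' := by
  have := i.isLt; have := i'.isLt
  fin_cases a <;> fin_cases a' <;>
    simp [crossColumn, crossCentre, Matrix.vecCons_inj, Fin.ext_iff] at heq ha ⊢ <;> omega

lemma eq_of_crossRow_eq (h : 4 * M < n) {i i' : Fin M} {a a' : Fin 4}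
    (heq : crossRow h i a = crossRow h i' a')
    (ha : crossRow h i a ≠ crossCentre (by omega : 2 * M < n)) :
    i = i' := by
  have := i.isLt; have := i'.isLt
  fin_cases a <;> fin_cases a' <;>
    simp [crossRow, crossCentre, Matrix.vecCons_inj, Fin.ext_iff] at heq ha ⊢ <;> omega

lemma le_patternHammingDist_crossFun (h : 4 * M < n) :
    M ≤ patternHammingDist (crossFun n M) perm2413 := by
  refine le_patternHammingDist (by norm_num) fun g hg => ?_
  rcases lt_or_ge 4 (g (crossCentre (by omega : 2 * M < n))) with hc | hc
  · exact exists_injective_ne_of_chains hg _ (crossColumn h)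
      (fun i => isPiAppearance_crossColumn h i hc) fun _ _ _ _ => eq_of_crossColumn_eq h
  · exact exists_injective_ne_of_chains hg _ (crossRow h)
      (fun i => isPiAppearance_crossRow h i (by linarith)) fun _ _ _ _ => eq_of_crossRow_eq h

end CrossChains

/-- There are `c > 0` and `n₀` such that for every `n ≥ n₀` there is a
function `f : [n]² → ℝ` whose deletion distance from `(2,4,1,3)`-freeness is at most `1`
and whose Hamming distance from `(2,4,1,3)`-freeness is at least `c·n`. -/
theorem stmt4 : ∃ c : ℝ, 0 < c ∧ ∃ n₀ : ℕ, ∀ n : ℕ, n₀ ≤ n →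
    ∃ f : (Fin 2 → Fin n) → ℝ,
      patternDeletionDist f perm2413 ≤ 1 ∧ c * (n : ℝ) ≤ (patternHammingDist f perm2413 : ℝ) := by
  refine ⟨1 / 10, by norm_num, 10, fun n hn => ⟨crossFun n (n / 5),
    patternDeletionDist_crossFun_le_one (by omega), ?_⟩⟩
  have hcount : n ≤ 10 * patternHammingDist (crossFun n (n / 5)) perm2413 := by
    have := le_patternHammingDist_crossFun (n := n) (M := n / 5) (by omega)
    omega
  have : (n : ℝ) ≤ 10 * patternHammingDist (crossFun n (n / 5)) perm2413 := by
    exact_mod_cast hcount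
  linarith
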